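/- arXiv:1507.04123 — 4 statements merged into one kernel-verified Lean document; each statement's English description precedes it below -/
import Mathlib

section
/- The ordinary generating function B̂(x) = Σ_{n≥0} βₙ xⁿ of the Carlitz q-Bernoulli numbers satisfies (q/(1−x))·B̂(qx/(1−x)) − B̂(x) = q − 1 + x as formal power series. -/
open Finset Polynomial PowerSeries

noncomputable section

/-- The variable `q`, viewed as a rational function over `ℚ`. -/
def qv : RatFunc ℚ := RatFunc.X

/-- The Carlitz q-Bernoulli numbers: `β 0 = 1` together with the umbral recurrence
`q·(qβ+1)^n − β_n = [n = 1]` for `n ≥ 1`, where after binomial expansion the powers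
`β^k` are replaced by `β k`. -/
def IsCarlitz (β : ℕ → RatFunc ℚ) : Prop :=
  β 0 = 1 ∧ ∀ n : ℕ, 1 ≤ n →
    qv * (∑ k ∈ Finset.range (n + 1), (n.choose k : RatFunc ℚ) * qv ^ k * β k) - β n
      = if n = 1 then 1 else 0

/-- Substitution `G(F)` of a power series `F` with zero constant term into `G`:
the `m`-th coefficient only depends on the partial sum `Σ_{n ≤ m} (coeff n G)·Fⁿ`. -/
def substSeries (F G : PowerSeries (RatFunc ℚ)) : PowerSeries (RatFunc ℚ) :=
  PowerSeries.mk fun m =>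
    PowerSeries.coeff m
      (∑ n ∈ Finset.range (m + 1),
        PowerSeries.C (PowerSeries.coeff n G) * F ^ n)

/-!
Since `(1 - x)⁻¹ · (qx/(1 - x))ⁿ = qⁿ xⁿ/(1 - x)ⁿ⁺¹` has `m`-th coefficient `qⁿ·C(m, n)`, the
`m`-th coefficient of `(q/(1 - x))·B̂(qx/(1 - x))` is `q·Σₙ C(m, n) qⁿ βₙ`, i.e. the umbral
`q(qβ + 1)ᵐ`. The recurrence then leaves `[m = 1]` after subtracting `βₘ`, and `q − 1` at `m = 0`.
-/

namespace PowerSeries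

section Geometric

variable {K : Type*} [Field K]

theorem inv_one_sub_X_pow_succ (n : ℕ) :
    (1 - X : K⟦X⟧)⁻¹ ^ (n + 1) = mk fun m => ((n + m).choose n : K) := by
  refine left_inv_eq_right_inv (a := (1 - X) ^ (n + 1)) ?_ ?_
  · rw [← mul_pow, PowerSeries.inv_mul_cancel _ (by simp), one_pow]
  · rw [mul_comm]
    exact mk_add_choose_mul_one_sub_pow_eq_one K n

theorem coeff_X_pow_mul_inv_one_sub_X_pow_succ (n m : ℕ) :
    coeff m (X ^ n * (1 - X : K⟦X⟧)⁻¹ ^ (n + 1)) = (m.choose n : K) := by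
  rw [coeff_X_pow_mul', inv_one_sub_X_pow_succ, coeff_mk]
  split_ifs with h
  · rw [Nat.add_sub_cancel' h]
  · rw [Nat.choose_eq_zero_of_lt (not_le.mp h), Nat.cast_zero]

end Geometric

section Substitution

variable {F : PowerSeries (RatFunc ℚ)}

theorem trunc_substSeries (hF : constantCoeff F = 0) (G : PowerSeries (RatFunc ℚ)) (m : ℕ) :
    trunc (m + 1) (substSeries F G)
      = trunc (m + 1) (∑ n ∈ range (m + 1), C (coeff n G) * F ^ n) := by
  ext j
  simp only [coeff_trunc]
  split_ifs with hj
  · rw [substSeries, coeff_mk, map_sum, map_sum]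
    refine Finset.sum_subset (range_subset_range.mpr hj) fun n _ hn => ?_
    have hXn : X ^ n ∣ F ^ n := pow_dvd_pow_of_dvd (X_dvd_iff.mpr hF) n
    rw [coeff_C_mul, (X_pow_dvd_iff.mp hXn) j (by simpa using hn), mul_zero]
  · rfl

theorem coeff_mul_substSeries (hF : constantCoeff F = 0) (A G : PowerSeries (RatFunc ℚ))
    (m : ℕ) :
    coeff m (A * substSeries F G)
      = coeff m (A * ∑ n ∈ range (m + 1), C (coeff n G) * F ^ n) := by
  rw [coeff_mul_eq_coeff_trunc_mul_trunc _ _ m.lt_succ_self, trunc_substSeries hF,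
    ← coeff_mul_eq_coeff_trunc_mul_trunc _ _ m.lt_succ_self]

end Substitution

theorem coeff_C_mul_inv_one_sub_X_mul_substSeries (c : RatFunc ℚ) (G : PowerSeries (RatFunc ℚ))
    (m : ℕ) :
    coeff m (C c * (1 - X)⁻¹ * substSeries (C c * X * (1 - X)⁻¹) G)
      = c * ∑ n ∈ range (m + 1), (m.choose n : RatFunc ℚ) * c ^ n * coeff n G := by
  have hF : constantCoeff (C c * X * (1 - X : PowerSeries (RatFunc ℚ))⁻¹) = 0 := by simp
  have hterm : ∀ n : ℕ, (1 - X)⁻¹ * (C (coeff n G) * (C c * X * (1 - X)⁻¹) ^ n)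
      = C (coeff n G * c ^ n) * (X ^ n * (1 - X : PowerSeries (RatFunc ℚ))⁻¹ ^ (n + 1)) := by
    intro n
    rw [mul_pow, mul_pow, map_mul, map_pow]
    ring
  rw [mul_assoc, coeff_C_mul, coeff_mul_substSeries hF, mul_sum, map_sum]
  congr 1
  refine sum_congr rfl fun n _ => ?_
  rw [hterm, coeff_C_mul, coeff_X_pow_mul_inv_one_sub_X_pow_succ]
  ring

end PowerSeries

/-- The functional equation `(q/(1−x))·B̂(qx/(1−x)) − B̂(x) = q − 1 + x` for the ordinary
generating function `B̂(x) = Σ βₙ xⁿ` of the Carlitz q-Bernoulli numbers. -/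
theorem carlitz_ogf_functional_equation (β : ℕ → RatFunc ℚ) (h : IsCarlitz β) :
    PowerSeries.C qv * (1 - PowerSeries.X)⁻¹
        * substSeries (PowerSeries.C qv * PowerSeries.X * (1 - PowerSeries.X)⁻¹)
            (PowerSeries.mk fun n => β n)
      - PowerSeries.mk (fun n => β n)
      = PowerSeries.C (qv - 1) + PowerSeries.X := by
  ext m
  rw [map_sub, PowerSeries.coeff_C_mul_inv_one_sub_X_mul_substSeries, map_add]
  simp only [PowerSeries.coeff_mk]
  rcases m with _ | m
  · simp [h.1]
  · rw [h.2 (m + 1) m.succ_pos, PowerSeries.coeff_C, PowerSeries.coeff_X]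
    simp
end
end

section
/- For integers 0 ≤ i ≤ d, the linear functional Ψ with Ψ(xⁿ) = βₙ satisfies Ψ([i,x;d]_q) = (−1)^{d−i} q^{−C(d−i,2)} / ([d+1]_q · qbinom(d,i)_q), where [i,x;d]_q = (1/[d]!_q)·∏_{t=1}^{d} ([i−d+t]_q + q^{i−d+t} x). -/
open Finset Polynomial PowerSeries

noncomputable section

/-- The q-integer `[m]_q = (q^m − 1)/(q − 1)`, for `m : ℤ`. -/
def qint (m : ℤ) : RatFunc ℚ := (qv ^ m - 1) / (qv - 1)

/-- The q-factorial `[n]!_q`. -/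
def qfact (n : ℕ) : RatFunc ℚ := ∏ t ∈ Finset.range n, qint (t + 1)

/-- The Gaussian binomial coefficient. -/
def qbinom (n k : ℕ) : RatFunc ℚ := qfact n / (qfact k * qfact (n - k))

/-- The linear functional `Ψ` on polynomials in `x`, sending `xⁿ` to `β n`. -/
def Psi (β : ℕ → RatFunc ℚ) (p : Polynomial (RatFunc ℚ)) : RatFunc ℚ :=
  p.sum fun n a => a * β n

/-- The q-binomial polynomial
`[i, x; d]_q = (1/[d]!_q) ∏_{t=1}^{d} ([i−d+t]_q + q^{i−d+t} x)`. -/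
def qbase (i d : ℕ) : Polynomial (RatFunc ℚ) :=
  Polynomial.C (qfact d)⁻¹ *
    ∏ t ∈ Finset.Icc 1 d,
      (Polynomial.C (qint ((i : ℤ) - d + t)) +
        Polynomial.C (qv ^ ((i : ℤ) - d + t)) * Polynomial.X)

/-!
Under `Ψ`, the substitution `x ↦ qx + 1` shifts `[i, x; d]_q` to `[i+1, x; d]_q`, and the Carlitz
recurrence says exactly that `q Ψ(p(qx+1)) = Ψ(p) + p'(0) + (q-1) p(0)`. For `i < d` the polynomial
`[i, x; d]_q` has the factor `x`, so `p(0) = 0` and `p'(0)` is an explicit product of q-integers;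
this determines `Ψ([i, x; d]_q)` by descending induction on `i`, starting from the diagonal value
`Ψ([d, x; d]_q) = 1/[d+1]_q`. The diagonal value follows by induction on `d` from the q-Pascal rule
`[d+1, x; d+1]_q = [d, x; d]_q + q^{d+1} [d, x; d+1]_q` and the same functional equation.
-/

lemma qv_ne_zero : qv ≠ 0 := RatFunc.X_ne_zero

lemma qv_pow_ne_one {n : ℕ} (hn : n ≠ 0) : qv ^ n ≠ 1 := by
  intro h
  have : (Polynomial.X ^ n : ℚ[X]) = 1 :=
    RatFunc.algebraMap_injective ℚ (by simpa [qv, RatFunc.algebraMap_X] using h)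
  simpa [hn] using congrArg natDegree this

lemma qv_sub_one_ne_zero : qv - 1 ≠ 0 :=
  sub_ne_zero.mpr (by simpa using qv_pow_ne_one one_ne_zero)

lemma qv_sub_one_mul_qint (m : ℤ) : (qv - 1) * qint m = qv ^ m - 1 :=
  mul_div_cancel₀ _ qv_sub_one_ne_zero

lemma qint_ne_zero {m : ℤ} (hm : m ≠ 0) : qint m ≠ 0 := by
  intro h
  have hpow : qv ^ m = 1 := by
    simpa [h, sub_eq_zero] using (qv_sub_one_mul_qint m).symm
  obtain ⟨n, rfl | rfl⟩ := Int.eq_nat_or_neg m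
  · exact qv_pow_ne_one (by simpa using hm) (by simpa using hpow)
  · exact qv_pow_ne_one (by simpa using hm) (by simpa using hpow)

lemma qint_zero : qint 0 = 0 := by simp [qint]

lemma qint_one : qint 1 = 1 := by
  rw [qint, zpow_one]
  exact div_self qv_sub_one_ne_zero

lemma qint_add (a b : ℤ) : qint (a + b) = qint a + qv ^ a * qint b := by
  simp only [qint, zpow_add₀ qv_ne_zero]
  field_simp [qv_sub_one_ne_zero]
  ring

lemma qint_neg (m : ℤ) : qint (-m) = -(qv ^ (-m) * qint m) := by
  have h := qint_add (-m) m
  rw [neg_add_cancel, qint_zero] at h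
  linear_combination -h

lemma qfact_succ (n : ℕ) : qfact (n + 1) = qfact n * qint (n + 1) :=
  prod_range_succ _ n

lemma qfact_ne_zero (n : ℕ) : qfact n ≠ 0 :=
  prod_ne_zero_iff.mpr fun _ _ => qint_ne_zero (by omega)

lemma prod_range_qint_sub (j : ℕ) :
    ∏ k ∈ range j, qint ((k : ℤ) - j) = (-1) ^ j * qv ^ (-((j + 1).choose 2 : ℤ)) * qfact j := by
  induction j with
  | zero => simp [qfact]
  | succ j ih =>
    rw [prod_range_succ', qfact_succ, Nat.choose_succ_succ' (j + 1), Nat.choose_one_right]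
    have hsum : ∏ k ∈ range j, qint (((k + 1 : ℕ) : ℤ) - ((j + 1 : ℕ) : ℤ))
        = ∏ k ∈ range j, qint ((k : ℤ) - j) := by
      push_cast
      simp only [add_sub_add_right_eq_sub]
    rw [hsum, ih, show ((0 : ℕ) : ℤ) - ((j + 1 : ℕ) : ℤ) = -((j : ℤ) + 1) by push_cast; ring,
      qint_neg]
    push_cast
    rw [show -((j : ℤ) + 1 + (j + 1).choose 2) = -((j + 1).choose 2 : ℤ) + -((j : ℤ) + 1) by ring,
      zpow_add₀ qv_ne_zero]
    ring

section Psi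

variable (β : ℕ → RatFunc ℚ)

def psiLinear : (RatFunc ℚ)[X] →ₗ[RatFunc ℚ] RatFunc ℚ :=
  lsum fun n => LinearMap.mulRight (RatFunc ℚ) (β n)

lemma psiLinear_apply (p : (RatFunc ℚ)[X]) : psiLinear β p = Psi β p := rfl

lemma Psi_add (p r : (RatFunc ℚ)[X]) : Psi β (p + r) = Psi β p + Psi β r :=
  map_add (psiLinear β) p r

lemma Psi_C_mul (a : RatFunc ℚ) (p : (RatFunc ℚ)[X]) :
    Psi β (Polynomial.C a * p) = a * Psi β p := by
  rw [← Polynomial.smul_eq_C_mul, ← psiLinear_apply, map_smul, smul_eq_mul, psiLinear_apply]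

lemma Psi_C_mul_X_pow (a : RatFunc ℚ) (n : ℕ) :
    Psi β (Polynomial.C a * Polynomial.X ^ n) = a * β n := by
  rw [C_mul_X_pow_eq_monomial, Psi, sum_monomial_index a _ (zero_mul _)]

lemma Psi_one : Psi β 1 = β 0 := by
  simpa using Psi_C_mul_X_pow β 1 0

lemma Psi_C_mul_X_add_one_pow (n : ℕ) :
    Psi β ((Polynomial.C qv * Polynomial.X + 1) ^ n)
      = ∑ k ∈ range (n + 1), (n.choose k : RatFunc ℚ) * qv ^ k * β k := by
  rw [add_pow, ← psiLinear_apply, map_sum]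
  refine sum_congr rfl fun k _ => ?_
  rw [psiLinear_apply, one_pow, mul_one, mul_pow, ← C_pow, ← C_eq_natCast, mul_comm, ← mul_assoc,
    ← C_mul, Psi_C_mul_X_pow]

end Psi

def qfactor (m : ℤ) : (RatFunc ℚ)[X] :=
  Polynomial.C (qint m) + Polynomial.C (qv ^ m) * Polynomial.X

lemma qfactor_add (a b : ℤ) :
    qfactor (a + b) = Polynomial.C (qint a) + Polynomial.C (qv ^ a) * qfactor b := by
  simp only [qfactor, qint_add, zpow_add₀ qv_ne_zero, map_add, map_mul]
  ring

lemma qfactor_zero : qfactor 0 = Polynomial.X := by simp [qfactor, qint_zero]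

lemma qfactor_one : qfactor 1 = Polynomial.C qv * Polynomial.X + 1 := by
  simp [qfactor, qint_one, add_comm]

lemma eval_zero_qfactor (m : ℤ) : (qfactor m).eval 0 = qint m := by simp [qfactor]

lemma qfactor_comp (m : ℤ) :
    (qfactor m).comp (Polynomial.C qv * Polynomial.X + 1) = qfactor (m + 1) := by
  rw [qfactor_add, ← qfactor_one, qfactor, add_comp, mul_comp, C_comp, C_comp, X_comp]

lemma qbase_eq_prod_range (i d : ℕ) :
    qbase i d = Polynomial.C (qfact d)⁻¹ * ∏ k ∈ range d, qfactor ((i : ℤ) - d + k + 1) := by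
  rw [qbase, ← Ico_add_one_right_eq_Icc, prod_Ico_eq_prod_range, Nat.add_sub_cancel]
  congr 1
  refine prod_congr rfl fun k _ => ?_
  rw [qfactor]
  push_cast
  ring_nf

lemma qbase_comp (i d : ℕ) :
    (qbase i d).comp (Polynomial.C qv * Polynomial.X + 1) = qbase (i + 1) d := by
  rw [qbase_eq_prod_range, qbase_eq_prod_range, mul_comp, C_comp, Polynomial.prod_comp]
  congr 1
  refine prod_congr rfl fun k _ => ?_
  rw [qfactor_comp]
  push_cast
  ring_nf

lemma qbase_succ_succ (i d : ℕ) :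
    qbase (i + 1) (d + 1) = qbase i d + Polynomial.C (qv ^ ((d : ℤ) + 1)) * qbase i (d + 1) := by
  rw [qbase_eq_prod_range, qbase_eq_prod_range, qbase_eq_prod_range, prod_range_succ,
    prod_range_succ']
  set M := ∏ k ∈ range d, qfactor ((i : ℤ) - d + k + 1)
  have hM : ∏ k ∈ range d, qfactor ((i + 1 : ℕ) - (d + 1 : ℕ) + k + 1) = M :=
    prod_congr rfl fun k _ => congrArg qfactor (by push_cast; ring)
  have hM' : ∏ k ∈ range d, qfactor ((i : ℤ) - (d + 1 : ℕ) + (k + 1 : ℕ) + 1) = M :=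
    prod_congr rfl fun k _ => congrArg qfactor (by push_cast; ring)
  have hfirst : qfactor ((i : ℤ) - (d + 1 : ℕ) + (0 : ℕ) + 1) = qfactor (i - d) :=
    congrArg qfactor (by push_cast; ring)
  have hlast : qfactor ((i + 1 : ℕ) - (d + 1 : ℕ) + d + 1)
      = Polynomial.C (qint ((d : ℤ) + 1))
        + Polynomial.C (qv ^ ((d : ℤ) + 1)) * qfactor (i - d) := by
    rw [← qfactor_add]
    push_cast
    ring_nf
  have hC : Polynomial.C (qint ((d : ℤ) + 1))⁻¹ * Polynomial.C (qint ((d : ℤ) + 1)) = 1 := by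
    rw [← C_mul, inv_mul_cancel₀ (qint_ne_zero (by positivity)), C_1]
  rw [hM, hM', hfirst, hlast, qfact_succ, mul_inv, C_mul]
  linear_combination (Polynomial.C (qfact d)⁻¹ * M) * hC

/-- For `i < d` the factor with index `t = d - i` is `[0]_q + q⁰ x = x`. -/
lemma qbase_eq_C_mul_X_mul (i j : ℕ) :
    qbase i (i + j + 1) = Polynomial.C (qfact (i + j + 1))⁻¹ * (Polynomial.X *
      ((∏ k ∈ range j, qfactor ((k : ℤ) - j)) * ∏ k ∈ range i, qfactor ((k : ℤ) + 1))) := by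
  rw [qbase_eq_prod_range, show i + j + 1 = j + 1 + i by ring, prod_range_add, prod_range_succ]
  have hlow : ∏ k ∈ range j, qfactor ((i : ℤ) - (j + 1 + i : ℕ) + k + 1)
      = ∏ k ∈ range j, qfactor ((k : ℤ) - j) :=
    prod_congr rfl fun k _ => congrArg qfactor (by push_cast; ring)
  have hmid : qfactor ((i : ℤ) - (j + 1 + i : ℕ) + j + 1) = Polynomial.X := by
    rw [← qfactor_zero]
    congr 1
    push_cast
    ring
  have hhigh : ∏ k ∈ range i, qfactor ((i : ℤ) - (j + 1 + i : ℕ) + (j + 1 + k : ℕ) + 1)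
      = ∏ k ∈ range i, qfactor ((k : ℤ) + 1) :=
    prod_congr rfl fun k _ => congrArg qfactor (by push_cast; ring)
  rw [hlow, hmid, hhigh]
  ring

lemma coeff_zero_qbase (i j : ℕ) : (qbase i (i + j + 1)).coeff 0 = 0 := by
  rw [qbase_eq_C_mul_X_mul, Polynomial.coeff_C_mul, mul_coeff_zero, Polynomial.coeff_X_zero,
    zero_mul, mul_zero]

lemma coeff_one_qbase (i j : ℕ) :
    (qbase i (i + j + 1)).coeff 1
      = (-1) ^ j * qv ^ (-((j + 1).choose 2 : ℤ)) * qfact j * qfact i / qfact (i + j + 1) := by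
  rw [qbase_eq_C_mul_X_mul, Polynomial.coeff_C_mul, Polynomial.coeff_X_mul,
    coeff_zero_eq_eval_zero, eval_mul, eval_prod, eval_prod]
  simp only [eval_zero_qfactor]
  rw [prod_range_qint_sub, inv_mul_eq_div]
  rfl

section Carlitz

variable {β : ℕ → RatFunc ℚ}

lemma IsCarlitz.qv_mul_Psi_comp (h : IsCarlitz β) (p : (RatFunc ℚ)[X]) :
    qv * Psi β (p.comp (Polynomial.C qv * Polynomial.X + 1))
      = Psi β p + p.coeff 1 + (qv - 1) * p.coeff 0 := by
  induction p using Polynomial.induction_on' with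
  | add p r hp hr =>
    rw [add_comp, Psi_add, Psi_add, coeff_add, coeff_add]
    linear_combination hp + hr
  | monomial n a =>
    rw [← C_mul_X_pow_eq_monomial, mul_comp, C_comp, X_pow_comp, Psi_C_mul,
      Psi_C_mul_X_add_one_pow, Psi_C_mul_X_pow, Polynomial.coeff_C_mul_X_pow,
      Polynomial.coeff_C_mul_X_pow]
    rcases Nat.eq_zero_or_pos n with rfl | hn
    · simp [h.1]
      ring
    · have hrec := h.2 n hn
      split_ifs at hrec ⊢ <;> first | omega | linear_combination a * hrec

lemma IsCarlitz.qv_mul_Psi_qbase_succ (h : IsCarlitz β) (i j : ℕ) :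
    qv * Psi β (qbase (i + 1) (i + j + 1)) = Psi β (qbase i (i + j + 1))
      + (-1) ^ j * qv ^ (-((j + 1).choose 2 : ℤ)) * qfact j * qfact i / qfact (i + j + 1) := by
  rw [← qbase_comp, h.qv_mul_Psi_comp, coeff_one_qbase, coeff_zero_qbase, mul_zero, add_zero]

lemma IsCarlitz.Psi_qbase_self (h : IsCarlitz β) (d : ℕ) :
    Psi β (qbase d d) = (qint (d + 1))⁻¹ := by
  induction d with
  | zero =>
    have : qbase 0 0 = 1 := by simp [qbase, qfact]
    simp [this, Psi_one, h.1, qint_one]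
  | succ d ih =>
    have hstep := h.qv_mul_Psi_qbase_succ d 0
    have hpascal := congrArg (Psi β) (qbase_succ_succ d d)
    rw [Psi_add, Psi_C_mul, ih] at hpascal
    simp only [add_zero, zero_add, pow_zero, Nat.choose_succ_self, Nat.cast_zero, neg_zero,
      zpow_zero, one_mul] at hstep
    rw [qfact_succ, show qfact 0 = 1 from prod_range_zero _, one_mul,
      div_mul_cancel_left₀ (qfact_ne_zero d)] at hstep
    push_cast
    have hq1 := qv_sub_one_mul_qint (d + 1)
    have hq2 := qv_sub_one_mul_qint (d + 1 + 1)
    have hI := mul_inv_cancel₀ (qint_ne_zero (m := d + 1) (by positivity))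
    rw [zpow_add_one₀ qv_ne_zero] at hq2
    set A := Psi β (qbase (d + 1) (d + 1))
    -- eliminating `Ψ([d, x; d+1]_q)` from `hstep` and `hpascal` leaves `A (q^{d+2} - 1) = q - 1`
    have hA : (qv - 1) * (A * qint (d + 1 + 1) - 1) = 0 := by
      linear_combination A * hq2 + qv ^ ((d : ℤ) + 1) * hstep - hpascal
        - (qint (d + 1))⁻¹ * hq1 + (qv - 1) * hI
    refine eq_inv_of_mul_eq_one_left ?_
    linear_combination (mul_eq_zero.mp hA).resolve_left qv_sub_one_ne_zero

lemma IsCarlitz.Psi_qbase_add (h : IsCarlitz β) (i j : ℕ) :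
    Psi β (qbase i (i + j)) = (-1) ^ j * qv ^ (-(j.choose 2 : ℤ)) * qfact i * qfact j
      / (qint (i + j + 1) * qfact (i + j)) := by
  induction j generalizing i with
  | zero =>
    rw [add_zero, h.Psi_qbase_self]
    field_simp [qfact_ne_zero]
    simp [qfact]
  | succ j ih =>
    have hstep := h.qv_mul_Psi_qbase_succ i j
    have hnext := ih (i + 1)
    have hchoose : qv ^ (-(j.choose 2 : ℤ)) = qv ^ (-((j + 1).choose 2 : ℤ)) * qv ^ (j : ℤ) := by
      rw [← zpow_add₀ qv_ne_zero, Nat.choose_succ_succ', Nat.choose_one_right]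
      push_cast
      ring_nf
    have hsplit : qint ((i : ℤ) + j + 1 + 1)
        = qint ((j : ℤ) + 1) + qv ^ (j : ℤ) * qv * qint (i + 1) := by
      rw [← zpow_add_one₀ qv_ne_zero, ← qint_add]
      ring_nf
    have hQ : qint ((i : ℤ) + j + 1 + 1) ≠ 0 := qint_ne_zero (by positivity)
    rw [show i + 1 + j = i + j + 1 by ring, hchoose, qfact_succ i,
      show ((i + 1 : ℕ) : ℤ) + j + 1 = i + j + 1 + 1 by push_cast; ring] at hnext
    rw [hnext] at hstep
    rw [← add_assoc, qfact_succ j, eq_sub_of_add_eq hstep.symm]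
    push_cast
    rw [show ((i : ℤ) + (j + 1) + 1) = i + j + 1 + 1 by ring]
    field_simp [qfact_ne_zero, hQ]
    linear_combination -((-1) ^ j * qv ^ (-((j + 1).choose 2 : ℤ))) * hsplit

end Carlitz

theorem psi_qbase (β : ℕ → RatFunc ℚ) (h : IsCarlitz β) (i d : ℕ) (hid : i ≤ d) :
    Psi β (qbase i d) =
      (-1) ^ (d - i) * qv ^ (-(((d - i).choose 2 : ℕ) : ℤ)) /
        (qint (d + 1) * qbinom d i) := by
  obtain ⟨j, rfl⟩ := Nat.exists_eq_add_of_le hid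
  rw [h.Psi_qbase_add, qbinom, Nat.add_sub_cancel_left]
  push_cast
  field_simp [qfact_ne_zero]
end
end

section
/- For all n ≥ 0, (1/z)∫₀^z βₙ(y)dy = (1/(q−1)ⁿ) Σ_{k=0}^{n} C(n,k)(−1)^{n−k} [k+1]_c/[k+1]_q, where c = 1+(q−1)z and βₙ(y) is the n-th Carlitz q-Bernoulli polynomial. -/
open Finset Polynomial PowerSeries

noncomputable section

/-- The Carlitz q-Bernoulli polynomial `βₙ(z) = Ψ((z + (z(q−1)+1)x)ⁿ)`,
expanded as a polynomial in `z` (the variable `X`). -/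
def Bpoly (β : ℕ → RatFunc ℚ) (n : ℕ) : Polynomial (RatFunc ℚ) :=
  ∑ k ∈ Finset.range (n + 1),
    Polynomial.C ((n.choose k : RatFunc ℚ) * β k) *
      (Polynomial.C (qv - 1) * Polynomial.X + 1) ^ k * Polynomial.X ^ (n - k)

/-! Put `c = 1 + (q - 1) z`. Since `(q - 1)(z + c x) = c (1 + (q - 1) x) - 1`, the binomial theorem
gives `(q - 1)ⁿ βₙ(z) = ∑ₖ C(n,k) (-1)ⁿ⁻ᵏ Ψ((1 + (q - 1) x)ᵏ) cᵏ`. By linearity the recurrence for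
the `βₙ` says `q Ψ(p(1 + q x)) = Ψ(p) + p'(0) + (q - 1) p(0)` for every polynomial `p`; for
`p = (1 + (q - 1) x)ᵏ` one has `p(1 + q x) = qᵏ p(x)`, whence `Ψ((1 + (q - 1) x)ᵏ) = (k + 1)/[k + 1]_q`.
It remains to integrate `c(y)ᵏ`, which has the antiderivative `c(y)ᵏ⁺¹ / ((k + 1)(q - 1))`. -/

namespace Polynomial

variable {A : Type*} [CommRing A]

def umbralEval (f : ℕ → A) : A[X] →ₗ[A] A :=
  Polynomial.lsum fun n => LinearMap.mulRight A (f n)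

theorem umbralEval_apply (f : ℕ → A) (p : A[X]) :
    umbralEval f p = p.sum fun n a => a * f n :=
  rfl

theorem umbralEval_monomial (f : ℕ → A) (n : ℕ) (a : A) :
    umbralEval f (monomial n a) = a * f n := by
  simp [umbralEval_apply, sum_monomial_index]

theorem umbralEval_C_mul (f : ℕ → A) (a : A) (p : A[X]) :
    umbralEval f (C a * p) = a * umbralEval f p := by
  rw [← smul_eq_C_mul, map_smul, smul_eq_mul]

theorem umbralEval_X_pow (f : ℕ → A) (n : ℕ) : umbralEval f (X ^ n) = f n := by
  rw [X_pow_eq_monomial, umbralEval_monomial, one_mul]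

theorem umbralEval_C_add_C_mul_pow (f : ℕ → A) (u v : A) (P : A[X]) (n : ℕ) :
    umbralEval f ((C u + C v * P) ^ n)
      = ∑ k ∈ range (n + 1), (n.choose k : A) * v ^ k * u ^ (n - k) * umbralEval f (P ^ k) := by
  rw [add_comm, add_pow, map_sum]
  refine Finset.sum_congr rfl fun k _ => ?_
  have hterm : (C v * P) ^ k * C u ^ (n - k) * (n.choose k : A[X])
      = C ((n.choose k : A) * v ^ k * u ^ (n - k)) * P ^ k := by
    simp only [map_mul, map_pow, map_natCast]
    ring
  rw [hterm, umbralEval_C_mul]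

theorem umbralEval_map {B : Type*} [CommRing B] (φ : A →+* B) (f : ℕ → A) (p : A[X]) :
    umbralEval (φ ∘ f) (p.map φ) = φ (umbralEval f p) := by
  induction p using Polynomial.induction_on' with
  | add p q hp hq => rw [Polynomial.map_add, map_add, map_add, hp, hq, map_add]
  | monomial n a => simp [umbralEval_monomial]

variable {K : Type*} [Field K]

def integralZeroTo (z : K) : K[X] →ₗ[K] K :=
  umbralEval fun m => z ^ (m + 1) / ((m : K) + 1)

theorem sum_mul_pow_succ_div_eq_integralZeroTo (z : K) (p : K[X]) :
    (p.sum fun m a => a * z ^ (m + 1) / ((m : K) + 1)) = integralZeroTo z p := by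
  simp only [integralZeroTo, umbralEval_apply, mul_div_assoc]

theorem integralZeroTo_derivative [CharZero K] (z : K) (P : K[X]) :
    integralZeroTo z (derivative P) = P.eval z - P.eval 0 := by
  induction P using Polynomial.induction_on' with
  | add P Q hP hQ => rw [derivative_add, map_add, hP, hQ, eval_add, eval_add]; ring
  | monomial n a =>
    rcases n with _ | m
    · simp
    · have hm : ((m : K) + 1) ≠ 0 := Nat.cast_add_one_ne_zero m
      rw [derivative_monomial, integralZeroTo, umbralEval_monomial, eval_monomial, eval_monomial,
        zero_pow m.succ_ne_zero, add_tsub_cancel_right]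
      push_cast
      field_simp
      ring

theorem integralZeroTo_C_mul_X_add_one_pow [CharZero K] (z : K) {a : K} (ha : a ≠ 0) (k : ℕ) :
    integralZeroTo z ((C a * X + 1) ^ k) = ((1 + a * z) ^ (k + 1) - 1) / ((k + 1) * a) := by
  have hk : ((k : K) + 1) ≠ 0 := Nat.cast_add_one_ne_zero k
  have hderiv : derivative ((C a * X + 1) ^ (k + 1)) = C ((k + 1) * a) * (C a * X + 1) ^ k := by
    rw [derivative_pow, derivative_add, derivative_C_mul_X, derivative_one, add_zero,
      add_tsub_cancel_right]
    simp only [map_mul, map_add, map_natCast, map_one, Nat.cast_add_one]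
    ring
  have hftc := integralZeroTo_derivative z ((C a * X + 1) ^ (k + 1))
  rw [hderiv, integralZeroTo, umbralEval_C_mul] at hftc
  simp only [eval_pow, eval_add, eval_mul, eval_C, eval_X, eval_one, mul_zero, zero_add,
    one_pow] at hftc
  rw [eq_div_iff (mul_ne_zero hk ha), integralZeroTo]
  linear_combination hftc

theorem _root_.qv_pow_ne_one_s13 {m : ℕ} (hm : m ≠ 0) : qv ^ m ≠ 1 := by
  rw [qv, ← RatFunc.algebraMap_X, ← map_pow, ← map_one (algebraMap ℚ[X] (RatFunc ℚ)),
    (RatFunc.algebraMap_injective ℚ).ne_iff]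
  intro h
  simpa [hm] using congrArg natDegree h

theorem _root_.qint_natCast_add_one (n : ℕ) : qint (n + 1) = (qv ^ (n + 1) - 1) / (qv - 1) := by
  rw [qint, ← zpow_natCast]
  push_cast
  rfl

theorem _root_.Psi_eq_umbralEval (β : ℕ → RatFunc ℚ) (p : (RatFunc ℚ)[X]) : Psi β p = umbralEval β p :=
  rfl

theorem _root_.qv_sub_one_ne_zero_s13 : qv - 1 ≠ 0 :=
  sub_ne_zero.2 (by simpa using qv_pow_ne_one_s13 one_ne_zero)

theorem _root_.IsCarlitz.qv_mul_sum_choose {β : ℕ → RatFunc ℚ} (h : IsCarlitz β) (n : ℕ) :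
    qv * ∑ k ∈ range (n + 1), (n.choose k : RatFunc ℚ) * qv ^ k * β k
      = β n + n * 0 ^ (n - 1) + (qv - 1) * 0 ^ n := by
  rcases n with _ | _ | n
  · simp [h.1]
  · have h1 := h.2 1 le_rfl
    rw [if_pos rfl] at h1
    linear_combination h1
  · have hn := h.2 (n + 2) (by omega)
    rw [if_neg (by omega)] at hn
    rw [show n + 2 - 1 = n + 1 by omega]
    linear_combination hn

theorem _root_.IsCarlitz.psi_comp {β : ℕ → RatFunc ℚ} (h : IsCarlitz β) (p : (RatFunc ℚ)[X]) :
    qv * Psi β (p.comp (1 + C qv * X))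
      = Psi β p + (derivative p).eval 0 + (qv - 1) * p.eval 0 := by
  change qv * umbralEval β _ = umbralEval β p + _ + _
  induction p using Polynomial.induction_on' with
  | add p q hp hq =>
    simp only [add_comp, map_add, eval_add]
    linear_combination hp + hq
  | monomial n a =>
    rw [monomial_comp, umbralEval_C_mul, ← C_1, umbralEval_C_add_C_mul_pow, umbralEval_monomial,
      derivative_monomial, eval_monomial, eval_monomial]
    simp only [umbralEval_X_pow, one_pow, mul_one]
    linear_combination a * h.qv_mul_sum_choose n

theorem _root_.IsCarlitz.psi_one_add_pow {β : ℕ → RatFunc ℚ} (h : IsCarlitz β) (n : ℕ) :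
    Psi β ((1 + C (qv - 1) * X) ^ n) = (n + 1) / qint (n + 1) := by
  have hcomp : ((1 + C (qv - 1) * X) ^ n).comp (1 + C qv * X)
      = C (qv ^ n) * (1 + C (qv - 1) * X) ^ n := by
    rw [pow_comp, C_pow, ← mul_pow]
    simp only [add_comp, one_comp, mul_comp, C_comp, X_comp]
    simp only [map_sub, map_one]
    ring
  have key := h.psi_comp ((1 + C (qv - 1) * X) ^ n)
  rw [hcomp, Psi_eq_umbralEval, Psi_eq_umbralEval, umbralEval_C_mul] at key
  have hder : eval 0 (derivative ((1 + C (qv - 1) * X) ^ n)) = n * (qv - 1) := by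
    simp [derivative_pow]
  have heval : eval 0 ((1 + C (qv - 1) * X) ^ n) = 1 := by simp
  rw [hder, heval] at key
  have hqint : qint (n + 1) ≠ 0 := by
    rw [qint_natCast_add_one]
    exact div_ne_zero (sub_ne_zero.2 (qv_pow_ne_one_s13 n.succ_ne_zero)) qv_sub_one_ne_zero_s13
  rw [eq_div_iff hqint, qint_natCast_add_one, Psi_eq_umbralEval]
  field_simp [qv_sub_one_ne_zero_s13]
  linear_combination key

/-- `K[z]` is `(RatFunc ℚ)[X]` and `x` is the outer variable, so `umbralEval (C ∘ β)` is `Ψ`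
extended `K[z]`-linearly and this is the defining formula `βₙ(z) = Ψ((z + c x)ⁿ)`. -/
theorem _root_.Bpoly_eq_umbralEval (β : ℕ → RatFunc ℚ) (n : ℕ) :
    Bpoly β n = umbralEval (C ∘ β) ((C X + C (C (qv - 1) * X + 1) * X) ^ n) := by
  rw [umbralEval_C_add_C_mul_pow, Bpoly]
  refine Finset.sum_congr rfl fun k _ => ?_
  simp only [umbralEval_X_pow, Function.comp_apply, map_mul, map_natCast]
  ring

theorem _root_.C_mul_Bpoly (β : ℕ → RatFunc ℚ) (n : ℕ) :
    C ((qv - 1) ^ n) * Bpoly β n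
      = ∑ k ∈ range (n + 1),
          C ((n.choose k : RatFunc ℚ) * (-1) ^ (n - k) * Psi β ((1 + C (qv - 1) * X) ^ k)) *
            (C (qv - 1) * X + 1) ^ k := by
  have hlin : C (C ((qv - 1) ^ n)) * (C X + C (C (qv - 1) * X + 1) * X) ^ n
      = (C (-1) + C (C (qv - 1) * X + 1) * (1 + C (qv - 1) * X).map C) ^ n := by
    rw [map_pow, map_pow, ← mul_pow]
    congr 1
    simp only [Polynomial.map_add, Polynomial.map_one, Polynomial.map_mul, map_C, map_X,
      map_add, map_mul, map_neg, map_one]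
    ring
  rw [Bpoly_eq_umbralEval, ← umbralEval_C_mul, hlin, umbralEval_C_add_C_mul_pow]
  refine Finset.sum_congr rfl fun k _ => ?_
  rw [← Polynomial.map_pow, umbralEval_map, Psi_eq_umbralEval]
  simp only [map_mul, map_pow, map_neg, map_one, map_natCast]
  ring

end Polynomial

theorem carlitz_poly_integral_general (β : ℕ → RatFunc ℚ) (h : IsCarlitz β) (n : ℕ)
    (z : RatFunc ℚ) :
    (1 / z) * ((Bpoly β n).sum fun m a => a * z ^ (m + 1) / ((m : RatFunc ℚ) + 1))
      = (1 / (qv - 1) ^ n) *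
        ∑ k ∈ Finset.range (n + 1),
          (n.choose k : RatFunc ℚ) * (-1) ^ (n - k) *
            (((1 + (qv - 1) * z) ^ (k + 1) - 1) / ((1 + (qv - 1) * z) - 1)) /
              qint (k + 1) := by
  have hq := qv_sub_one_ne_zero_s13
  have hint : (qv - 1) ^ n * integralZeroTo z (Bpoly β n)
      = ∑ k ∈ range (n + 1), (n.choose k : RatFunc ℚ) * (-1) ^ (n - k) *
          ((k + 1) / qint (k + 1)) * (((1 + (qv - 1) * z) ^ (k + 1) - 1) / ((k + 1) * (qv - 1))) := by
    rw [integralZeroTo, ← umbralEval_C_mul, C_mul_Bpoly, map_sum]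
    refine Finset.sum_congr rfl fun k _ => ?_
    rw [umbralEval_C_mul, ← integralZeroTo, integralZeroTo_C_mul_X_add_one_pow z hq,
      h.psi_one_add_pow]
  rw [sum_mul_pow_succ_div_eq_integralZeroTo, ← inv_mul_cancel_left₀ (pow_ne_zero n hq)
    (integralZeroTo z _), hint, mul_sum, mul_sum, mul_sum]
  refine Finset.sum_congr rfl fun k _ => ?_
  have hk : ((k : RatFunc ℚ) + 1) ≠ 0 := Nat.cast_add_one_ne_zero k
  rw [add_sub_cancel_left]
  field_simp

/-- `(1/z)∫₀^z βₙ(y) dy = (1/(q−1)ⁿ) Σₖ C(n,k)(−1)^{n−k} [k+1]_c/[k+1]_q`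
with `c = 1 + (q−1)z`, where the integral is the formal antiderivative. -/
theorem carlitz_poly_integral (β : ℕ → RatFunc ℚ) (h : IsCarlitz β) (n : ℕ)
    (z : RatFunc ℚ) (hz : z ≠ 0) :
    (1 / z) * ((Bpoly β n).sum fun m a => a * z ^ (m + 1) / ((m : RatFunc ℚ) + 1))
      = (1 / (qv - 1) ^ n) *
        ∑ k ∈ Finset.range (n + 1),
          (n.choose k : RatFunc ℚ) * (-1) ^ (n - k) *
            (((1 + (qv - 1) * z) ^ (k + 1) - 1) / ((1 + (qv - 1) * z) - 1)) /
              qint (k + 1) :=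
  carlitz_poly_integral_general β h n z

end
end

section
/- (Rogers' contraction of continued fractions) For a sequence (cₖ)_{k≥1}, the Stieltjes continued fraction 1/(1 + c₁x/(1 + c₂x/(1 + c₃x/⋯))) equals the Jacobi continued fraction 1/(1 + c₁x − c₁c₂x²/(1 + (c₂+c₃)x − c₃c₄x²/(1 + (c₄+c₅)x − ⋯))), in the sense that for each n ≥ 1 the n-th convergents agree up to order xⁿ (equivalently, the associated formal power series coincide). -/
noncomputable section

/-- The depth-`d` convergent of the Stieltjes continued fraction
`1/(1 + cᵢx/(1 + cᵢ₊₁x/(1 + ⋯)))`, starting at index `i`, as a formal power series. -/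
def Sconv {K : Type*} [Field K] (c : ℕ → K) : ℕ → ℕ → PowerSeries K
  | _, 0 => 1
  | i, d + 1 => (1 + PowerSeries.C (c i) * PowerSeries.X * Sconv c (i + 1) d)⁻¹

/-- The depth-`d` convergent of the contracted Jacobi continued fraction
`1/(1 + c₁x − c₁c₂x²/(1 + (c₂+c₃)x − c₃c₄x²/(1 + (c₄+c₅)x − ⋯)))`,
starting at level `m` (level `0` has linear coefficient `c₁`,
level `m ≥ 1` has linear coefficient `c_{2m} + c_{2m+1}`). -/
def Jconv {K : Type*} [Field K] (c : ℕ → K) : ℕ → ℕ → PowerSeries K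
  | _, 0 => 1
  | m, d + 1 =>
      (1 + PowerSeries.C (if m = 0 then c 1 else c (2 * m) + c (2 * m + 1))
            * PowerSeries.X
         - PowerSeries.C (c (2 * m + 1) * c (2 * m + 2)) * PowerSeries.X ^ 2
            * Jconv c (m + 1) d)⁻¹

/-!
Write `Sᵢ` for the Stieltjes fraction starting at `cᵢ`. From `Sᵢ₊₁ (1 + cᵢ₊₁ x Sᵢ₊₂) = 1` one gets
`cᵢ x Sᵢ₊₁ = cᵢ x - cᵢ cᵢ₊₁ x² Sᵢ₊₁ Sᵢ₊₂` and `Sᵢ₊₁ Sᵢ₊₂ = 1/(1 + cᵢ₊₁ x + cᵢ₊₂ x Sᵢ₊₃)`. So the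
fractions `1/(1 + a x + cᵢ x Sᵢ₊₁)`, taken two Stieltjes levels at a time, obey exactly the
recursion of the Jacobi fraction, with `a = c₂ₘ` at level `m ≥ 1` and `a = 0` at the top.
Inversion preserves congruences modulo `xᵏ`, so the depth-`2k` Stieltjes convergent agrees with
the depth-`k` Jacobi convergent modulo `x²ᵏ`; since the depth-`d` convergents are stable modulo
`xᵈ⁺¹` (Stieltjes) and `x²ᵈ⁺¹` (Jacobi), comparing both at depth `n` with depth `2n + 2` and
`n + 1` respectively gives the claim.
-/

open PowerSeries

theorem PowerSeries.X_pow_dvd_inv_sub_inv {K : Type*} [Field K] {φ ψ : K⟦X⟧} {n : ℕ}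
    (h : X ^ n ∣ φ - ψ) : X ^ n ∣ φ⁻¹ - ψ⁻¹ := by
  rcases n with _ | n
  · simp
  have hconst : constantCoeff φ = constantCoeff ψ :=
    sub_eq_zero.mp (by simpa using X_dvd_iff.mp ((dvd_pow_self X n.succ_ne_zero).trans h))
  by_cases hψ : constantCoeff ψ = 0
  · simp [inv_eq_zero.mpr hψ, inv_eq_zero.mpr (hconst.trans hψ)]
  have hφ : constantCoeff φ ≠ 0 := hconst ▸ hψ
  have key : φ⁻¹ - ψ⁻¹ = -(φ⁻¹ * ψ⁻¹) * (φ - ψ) := by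
    linear_combination ψ⁻¹ * PowerSeries.inv_mul_cancel φ hφ
      - φ⁻¹ * PowerSeries.mul_inv_cancel ψ hψ
  rw [key]
  exact h.mul_left _

section

variable {K : Type*} [Field K] (c : ℕ → K)

theorem Sconv_zero (i : ℕ) : Sconv c i 0 = 1 := rfl

theorem Sconv_succ (i d : ℕ) :
    Sconv c i (d + 1) = (1 + C (c i) * X * Sconv c (i + 1) d)⁻¹ := rfl

theorem Jconv_zero (m : ℕ) : Jconv c m 0 = 1 := rfl

theorem Jconv_succ (m d : ℕ) :
    Jconv c m (d + 1) =
      (1 + C (if m = 0 then c 1 else c (2 * m) + c (2 * m + 1)) * X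
        - C (c (2 * m + 1) * c (2 * m + 2)) * X ^ 2 * Jconv c (m + 1) d)⁻¹ := rfl

@[simp]
theorem constantCoeff_Sconv (i d : ℕ) : constantCoeff (Sconv c i d) = 1 := by
  induction d generalizing i with
  | zero => simp [Sconv_zero]
  | succ d ih => simp [Sconv_succ, ih]

theorem X_pow_dvd_Sconv_sub_Sconv {d e : ℕ} (i : ℕ) (hde : d ≤ e) :
    X ^ (d + 1) ∣ Sconv c i e - Sconv c i d := by
  induction d generalizing i e with
  | zero =>
    rcases e with _ | e
    · simp
    rw [Sconv_succ, show Sconv c i 0 = 1⁻¹ by rw [Sconv_zero, inv_one], zero_add]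
    apply X_pow_dvd_inv_sub_inv
    rw [pow_one]
    exact X_dvd_iff.mpr (by simp)
  | succ d ih =>
    obtain ⟨e, rfl⟩ : ∃ e', e = e' + 1 := ⟨e - 1, by omega⟩
    rw [Sconv_succ, Sconv_succ]
    apply X_pow_dvd_inv_sub_inv
    rw [add_sub_add_left_eq_sub, ← mul_sub, pow_succ']
    exact mul_dvd_mul (dvd_mul_left _ _) (ih (i + 1) (by omega))

theorem X_pow_dvd_Jconv_succ_sub_Jconv (d m : ℕ) :
    X ^ (2 * d + 1) ∣ Jconv c m (d + 1) - Jconv c m d := by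
  induction d generalizing m with
  | zero =>
    rw [Jconv_succ, show Jconv c m 0 = 1⁻¹ by rw [Jconv_zero, inv_one], mul_zero, zero_add]
    apply X_pow_dvd_inv_sub_inv
    rw [pow_one]
    exact X_dvd_iff.mpr (by simp)
  | succ d ih =>
    rw [Jconv_succ c m (d + 1), Jconv_succ c m d]
    apply X_pow_dvd_inv_sub_inv
    rw [dvd_sub_comm, sub_sub_sub_cancel_left, ← mul_sub,
      show 2 * (d + 1) + 1 = 2 + (2 * d + 1) by ring, pow_add]
    exact mul_dvd_mul (dvd_mul_left _ _) (ih (m + 1))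

/-- `1/(1 + a x + cᵢ x/(1 + cᵢ₊₁ x/(1 + ⋯)))`, of Stieltjes depth `d`. -/
def shiftedSconv (a : K) (i d : ℕ) : K⟦X⟧ :=
  Sconv c i d * (1 + C a * X * Sconv c i d)⁻¹

theorem shiftedSconv_zero_left (i d : ℕ) : shiftedSconv c 0 i d = Sconv c i d := by
  simp [shiftedSconv]

theorem shiftedSconv_add_two (a : K) (i d : ℕ) :
    shiftedSconv c a i (d + 2) =
      (1 + C (a + c i) * X
        - C (c i * c (i + 1)) * X ^ 2 * shiftedSconv c (c (i + 1)) (i + 2) d)⁻¹ := by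
  set s := Sconv c (i + 2) d
  set t := Sconv c (i + 1) (d + 1)
  set u := Sconv c i (d + 2)
  have ht : t * (1 + C (c (i + 1)) * X * s) = 1 :=
    PowerSeries.inv_mul_cancel _ (by simp)
  have hu : u * (1 + C (c i) * X * t) = 1 :=
    PowerSeries.inv_mul_cancel _ (by simp)
  have hw : (1 + C a * X * u) * (1 + C a * X * u)⁻¹ = 1 :=
    PowerSeries.mul_inv_cancel _ (by simp [u])
  have hst : shiftedSconv c (c (i + 1)) (i + 2) d = s * t := rfl
  rw [eq_inv_iff_mul_eq_one (by simp [hst, s, t]), hst, shiftedSconv, map_add, map_mul]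
  linear_combination (1 + C a * X * u)⁻¹ * hu
    - (1 + C a * X * u)⁻¹ * C (c i) * X * u * ht + hw

theorem X_pow_dvd_shiftedSconv_sub_Jconv (k m : ℕ) (a : K)
    (ha : (if m = 0 then c 1 else c (2 * m) + c (2 * m + 1)) = a + c (2 * m + 1)) :
    X ^ (2 * k) ∣ shiftedSconv c a (2 * m + 1) (2 * k) - Jconv c m k := by
  induction k generalizing m a with
  | zero => simp
  | succ k ih =>
    rw [mul_add_one, shiftedSconv_add_two, Jconv_succ, ha]
    apply X_pow_dvd_inv_sub_inv
    rw [sub_sub_sub_cancel_left, dvd_sub_comm, ← mul_sub, pow_add, mul_comm (X ^ (2 * k))]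
    refine mul_dvd_mul (dvd_mul_left _ _) ?_
    rw [show 2 * m + 1 + 2 = 2 * (m + 1) + 1 by ring]
    exact ih (m + 1) _ (by simp [mul_add_one])

theorem X_pow_dvd_Sconv_sub_Jconv (k : ℕ) :
    X ^ (2 * k) ∣ Sconv c 1 (2 * k) - Jconv c 0 k := by
  simpa [shiftedSconv_zero_left] using X_pow_dvd_shiftedSconv_sub_Jconv c k 0 0 (by simp)

end

theorem rogers_contraction_general {K : Type*} [Field K] (c : ℕ → K) (n : ℕ) :
    ∀ m : ℕ, m ≤ n →
      PowerSeries.coeff m (Sconv c 1 n) = PowerSeries.coeff m (Jconv c 0 n) := by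
  intro m hm
  have hS := X_pow_dvd_Sconv_sub_Sconv c 1 (by omega : n ≤ 2 * (n + 1))
  have hSJ := (pow_dvd_pow X (by omega : n + 1 ≤ 2 * (n + 1))).trans
    (X_pow_dvd_Sconv_sub_Jconv c (n + 1))
  have hJ := (pow_dvd_pow X (by omega : n + 1 ≤ 2 * n + 1)).trans
    (X_pow_dvd_Jconv_succ_sub_Jconv c n 0)
  have h : X ^ (n + 1) ∣ Sconv c 1 n - Jconv c 0 n := by
    convert (hSJ.sub hS).add hJ using 1
    ring
  exact sub_eq_zero.mp (by simpa using X_pow_dvd_iff.mp h m (by omega))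

/-- Rogers' contraction: the Stieltjes continued fraction
`1/(1 + c₁x/(1 + c₂x/(1 + c₃x/⋯)))` and the Jacobi continued fraction
`1/(1 + c₁x − c₁c₂x²/(1 + (c₂+c₃)x − c₃c₄x²/⋯))` define the same formal power
series: for each `n ≥ 1`, their depth-`n` convergents agree up to order `xⁿ`. -/
theorem rogers_contraction {K : Type*} [Field K] (c : ℕ → K) (n : ℕ) (hn : 1 ≤ n) :
    ∀ m : ℕ, m ≤ n →
      PowerSeries.coeff m (Sconv c 1 n) = PowerSeries.coeff m (Jconv c 0 n) :=
  rogers_contraction_general c n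
end
end
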